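/- arXiv:1105.0557 — 4 statements merged into one kernel-verified Lean document; each statement's English description precedes it below -/
import Mathlib

section
/- Let ℤ carry the discrete metric d (d(m,n) = 0 if m = n and d(m,n) = 1 otherwise), so that Iso(ℤ) is the group of all bijections of ℤ. Fix an enumeration {z_i} of ℤ and equip Iso(ℤ) with the metric ϱ(f,g) = Σ_{i=1}^∞ 3^{-i} d(f z_i, g z_i). Then for every surjective isometry T of (Iso(ℤ), ϱ) and every f ∈ Iso(ℤ), T(f) = T(e) ∘ f, where e is the identity of Iso(ℤ). -/
/-!
Since `1/3 < 1/2`, a sum `Σ 3⁻ⁱ⁻¹ εᵢ` with digits `εᵢ ∈ {0,1}` determines its digits, so `ϱ(f,g)`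
determines the set of points where `f` and `g` agree, and an isometry `T` preserves these sets.
Then `S = T(e)⁻¹ ∘ T` fixes `e` and preserves fixed-point sets; a permutation with the fixed points
of the transposition `(a b)` is `(a b)`, so `S` fixes all transpositions. Finally `f` and
`(x f(x))` agree at `x`, hence so do `S f` and `(x f(x))`, i.e. `S f (x) = f(x)`.
-/

open Filter Topology

noncomputable section

/-- The discrete metric on `ℤ`. -/
def dZ (m n : ℤ) : ℝ := if m = n then 0 else 1

/-- The metric `ϱ(f,g) = Σ_{i=1}^∞ 3⁻ⁱ d(f zᵢ, g zᵢ)` on `Iso(ℤ) = Perm ℤ`, for a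
fixed enumeration `z` of `ℤ` (indexed by `ℕ`, with weights `3⁻⁽ⁱ⁺¹⁾`). -/
def rhoZ (z : ℕ → ℤ) (f g : Equiv.Perm ℤ) : ℝ :=
  ∑' i : ℕ, (1 / 3 : ℝ) ^ (i + 1) * dZ (f (z i)) (g (z i))

open Equiv Cardinal

namespace Equiv.Perm

variable {α : Type*}

theorem eq_swap_of_apply_eq_self_iff [DecidableEq α] {s : Perm α} {a b : α}
    (h : ∀ x, s x = x ↔ swap a b x = x) : s = swap a b := by
  ext x
  by_cases hx : swap a b x = x
  · rw [hx, (h x).2 hx]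
  -- `s` moves `x`, hence also `s x`; so both lie in `{a, b}`.
  have hmoved : s x ≠ x := mt (h x).1 hx
  have hsx : s (s x) ≠ s x := s.injective.ne hmoved
  rw [Ne, h, ← Ne, swap_apply_ne_self_iff] at hsx
  rw [← Ne, swap_apply_ne_self_iff] at hx
  grind [swap_apply_left, swap_apply_right]

theorem eq_one_mul_of_apply_eq_apply_iff {T : Perm α → Perm α}
    (hT : ∀ f g x, T f x = T g x ↔ f x = g x) (f : Perm α) : T f = T 1 * f := by
  classical
  have hswap (a b : α) : T (swap a b) = T 1 * swap a b := by
    rw [← inv_mul_eq_iff_eq_mul]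
    refine eq_swap_of_apply_eq_self_iff fun x => ?_
    rw [mul_apply, inv_eq_iff_eq, eq_comm, hT, one_apply, eq_comm]
  ext x
  have hfx : T f x = T (swap x (f x)) x := (hT _ _ x).2 (swap_apply_left x (f x)).symm
  rw [hfx, hswap, mul_apply, mul_apply, swap_apply_left]

end Equiv.Perm

theorem rhoZ_eq_cantorFunction (z : ℕ → ℤ) (f g : Perm ℤ) :
    rhoZ z f g = 1 / 3 * cantorFunction (1 / 3) fun i => !decide (f (z i) = g (z i)) := by
  rw [rhoZ, cantorFunction, ← tsum_mul_left]
  congr 1 with i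
  by_cases hi : f (z i) = g (z i) <;> simp [cantorFunctionAux, dZ, hi, pow_succ']

theorem apply_eq_apply_iff_of_rhoZ_eq {z : ℕ → ℤ} (hz : Function.Surjective z)
    {f g f' g' : Perm ℤ} (h : rhoZ z f g = rhoZ z f' g') (x : ℤ) :
    f x = g x ↔ f' x = g' x := by
  rw [rhoZ_eq_cantorFunction, rhoZ_eq_cantorFunction, mul_right_inj' (by norm_num)] at h
  obtain ⟨i, rfl⟩ := hz x
  simpa using congrFun (cantorFunction_injective (by norm_num) (by norm_num) h) i

theorem isoIsoZ_apply_eq_comp_general (z : ℕ → ℤ) (hz : Function.Bijective z)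
    (T : Equiv.Perm ℤ → Equiv.Perm ℤ)
    (hTiso : ∀ f g : Equiv.Perm ℤ, rhoZ z (T f) (T g) = rhoZ z f g)
    (f : Equiv.Perm ℤ) :
    T f = T 1 * f :=
  Perm.eq_one_mul_of_apply_eq_apply_iff
    (fun f g => apply_eq_apply_iff_of_rhoZ_eq hz.2 (hTiso f g)) f

/-- Proposition 6.2: every surjective isometry `T` of `(Iso(ℤ), ϱ)` satisfies
`T(f) = T(e) ∘ f` for all `f ∈ Iso(ℤ)` (here `e` is the identity permutation and
`T 1 * f` is the composition `T(e) ∘ f`). -/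
theorem isoIsoZ_apply_eq_comp (z : ℕ → ℤ) (hz : Function.Bijective z)
    (T : Equiv.Perm ℤ → Equiv.Perm ℤ)
    (hTsurj : Function.Surjective T)
    (hTiso : ∀ f g : Equiv.Perm ℤ, rhoZ z (T f) (T g) = rhoZ z f g)
    (f : Equiv.Perm ℤ) :
    T f = T 1 * f :=
  isoIsoZ_apply_eq_comp_general z hz T hTiso f

end
end

section
/- Let ℤ carry the discrete metric, Iso(ℤ) the group of all bijections of ℤ with the metric ϱ(f,g) = Σ_{i=1}^∞ 3^{-i} d(f z_i, g z_i) for a fixed enumeration {z_i} of ℤ, and let Iso(Iso(ℤ)) be the group of surjective isometries of (Iso(ℤ), ϱ). Then the evaluation action of Iso(Iso(ℤ)) on Iso(ℤ) is proper: if {T_n} is a sequence in Iso(Iso(ℤ)) and f, g ∈ Iso(ℤ) are such that T_n(f) → g in (Iso(ℤ), ϱ), then {T_n} converges in Iso(Iso(ℤ)) with the topology of pointwise convergence; in particular every limit set L(f) is empty. -/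
/-!
`2ϱ(f, g)` is the ternary number whose `i`-th digit is `2` when `f zᵢ ≠ g zᵢ` and `0` otherwise,
and ternary expansions with digits in `{0, 2}` are unique. So an isometry `T` of `(Iso(ℤ), ϱ)`
preserves the agreement relation `f m = g m`, and a swap argument turns this into
`T h = T f ∘ f⁻¹ ∘ h`: every such isometry is a left translation. Since `ϱ`-convergence is
eventual pointwise agreement, `T_n f → g` then gives `T_n h → (g ∘ f⁻¹) ∘ h` for every `h`.
-/

open Filter Topology

noncomputable section

/-- `Iso(Iso(ℤ))`: the surjective isometries of `(Iso(ℤ), ϱ)`. -/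
def IsoIsoZ (z : ℕ → ℤ) : Type :=
  { T : Equiv.Perm ℤ → Equiv.Perm ℤ //
      Function.Surjective T ∧ ∀ f g : Equiv.Perm ℤ, rhoZ z (T f) (T g) = rhoZ z f g }

/-- `S` is a cluster point of the net `T` in `Iso(Iso(ℤ))` for the topology of
pointwise convergence on `(Iso(ℤ), ϱ)`. -/
def ClusterPW (z : ℕ → ℤ) {ι : Type*} [Preorder ι] (T : ι → IsoIsoZ z)
    (S : IsoIsoZ z) : Prop :=
  ∀ ε : ℝ, 0 < ε → ∀ F : Finset (Equiv.Perm ℤ), ∀ i₀ : ι,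
    ∃ i, i₀ ≤ i ∧ ∀ f ∈ F, rhoZ z ((T i).1 f) (S.1 f) < ε

open Equiv Real

namespace Real

theorem inv_pow_le_ofDigits_of_ne_zero {b : ℕ} [NeZero b] (d : ℕ → Fin b) {j : ℕ}
    (hj : d j ≠ 0) : ((b : ℝ) ^ (j + 1))⁻¹ ≤ ofDigits d := by
  have hdj : (1 : ℝ) ≤ d j := by
    exact_mod_cast Nat.one_le_iff_ne_zero.2 (Fin.val_ne_zero_iff.2 hj)
  calc ((b : ℝ) ^ (j + 1))⁻¹ ≤ ofDigitsTerm d j := le_mul_of_one_le_left (by positivity) hdj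
    _ ≤ ofDigits d := summable_ofDigitsTerm.le_tsum j fun _ _ => ofDigitsTerm_nonneg

theorem ofDigits_const_zero {b : ℕ} [NeZero b] : ofDigits (fun _ => (0 : Fin b)) = 0 := by
  simp [ofDigits, ofDigitsTerm]

theorem tendsto_ofDigits_nhds_zero_iff {ι : Type*} {l : Filter ι} {b : ℕ} [NeZero b]
    (hb : 1 < b) (d : ι → ℕ → Fin b) :
    Tendsto (fun i => ofDigits (d i)) l (𝓝 0) ↔ ∀ j, ∀ᶠ i in l, d i j = 0 := by
  constructor
  · intro h j
    have hpos : (0 : ℝ) < ((b : ℝ) ^ (j + 1))⁻¹ := by positivity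
    filter_upwards [h.eventually (gt_mem_nhds hpos)] with i hi
    by_contra hj
    exact (inv_pow_le_ofDigits_of_ne_zero (d i) hj).not_gt hi
  · intro h
    rw [Metric.tendsto_nhds]
    intro ε hε
    have hb' : (b : ℝ)⁻¹ < 1 := inv_lt_one_of_one_lt₀ (by exact_mod_cast hb)
    obtain ⟨n, hn⟩ := exists_pow_lt_of_lt_one hε hb'
    filter_upwards [(eventually_all_finset (Finset.range n)).2 fun j _ => h j] with i hi
    calc dist (ofDigits (d i)) 0 = |ofDigits (d i) - ofDigits (fun _ => (0 : Fin b))| := by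
          rw [ofDigits_const_zero, Real.dist_eq]
      _ ≤ ((b : ℝ) ^ n)⁻¹ :=
          abs_ofDigits_sub_ofDigits_le fun j hj => hi j (Finset.mem_range.2 hj)
      _ < ε := by rwa [← inv_pow]

end Real

namespace Equiv.Perm

theorem apply_eq_of_eqOn_compl_pair {α : Type*} {σ τ : Perm α} {a b : α}
    (h : ∀ x, x ≠ a → x ≠ b → σ x = τ x) (ha : σ a ≠ τ a) : σ a = τ b := by
  by_contra hb
  set c := τ.symm (σ a)
  have hτc : τ c = σ a := τ.apply_symm_apply _
  have hca : c ≠ a := fun e => ha (by rw [← hτc, e])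
  have hcb : c ≠ b := fun e => hb (by rw [← hτc, e])
  exact hca (σ.injective (by rw [h c hca hcb, hτc]))

theorem eq_mul_inv_mul_of_apply_eq_iff {α : Type*} {T : Perm α → Perm α}
    (hT : ∀ p q x, T p x = T q x ↔ p x = q x) (f h : Perm α) : T h = T f * f⁻¹ * h := by
  classical
  ext a
  set b := f⁻¹ (h a)
  have hfb : f b = h a := f.apply_symm_apply _
  show T h a = T f b
  by_cases hfa : h a = f a
  · rw [(hT h f a).2 hfa, show b = a from f.injective (hfb.trans hfa)]
  -- `k` agrees with `h` at `a` and with `f` off `{a, b}`.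
  let k := swap (f a) (h a) * f
  have hka : k a = h a := by simp [k]
  calc T h a = T k a := (hT h k a).2 hka.symm
    _ = T f b := by
      refine apply_eq_of_eqOn_compl_pair (fun x hxa hxb => (hT k f x).2 ?_)
        fun e => hfa (hka ▸ (hT k f a).1 e)
      exact swap_apply_of_ne_of_ne (f.injective.ne hxa) (hfb ▸ f.injective.ne hxb)

end Equiv.Perm

def disagreementDigits (z : ℕ → ℤ) (f g : Perm ℤ) (i : ℕ) : Fin 3 :=
  if f (z i) = g (z i) then 0 else 2

section disagreementDigits

variable {z : ℕ → ℤ} {f g : Perm ℤ}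

lemma disagreementDigits_eq_zero_iff {i : ℕ} :
    disagreementDigits z f g i = 0 ↔ f (z i) = g (z i) := by
  unfold disagreementDigits
  split_ifs <;> simpa

lemma disagreementDigits_ne_one (i : ℕ) : disagreementDigits z f g i ≠ 1 := by
  unfold disagreementDigits
  split_ifs <;> decide

lemma rhoZ_eq_inv_two_mul_ofDigits :
    rhoZ z f g = 2⁻¹ * ofDigits (disagreementDigits z f g) := by
  rw [rhoZ, ofDigits, ← tsum_mul_left]
  congr 1 with i
  unfold dZ ofDigitsTerm disagreementDigits
  split_ifs <;> simp [div_eq_mul_inv, inv_pow]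

end disagreementDigits

lemma apply_eq_iff_of_rhoZ_eq {z : ℕ → ℤ} (hz : Function.Surjective z) {f g f' g' : Perm ℤ}
    (h : rhoZ z f g = rhoZ z f' g') (m : ℤ) : f m = g m ↔ f' m = g' m := by
  obtain ⟨i, rfl⟩ := hz m
  have hdigits : disagreementDigits z f g = disagreementDigits z f' g' := by
    refine ofDigits_zero_two_sequence_unique disagreementDigits_ne_one
      disagreementDigits_ne_one ?_
    rw [rhoZ_eq_inv_two_mul_ofDigits, rhoZ_eq_inv_two_mul_ofDigits] at h
    linarith
  rw [← disagreementDigits_eq_zero_iff, ← disagreementDigits_eq_zero_iff, hdigits]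

lemma tendsto_rhoZ_nhds_zero_iff {z : ℕ → ℤ} (hz : Function.Surjective z) {ι : Type*}
    {l : Filter ι} (F : ι → Perm ℤ) (g : Perm ℤ) :
    Tendsto (fun i => rhoZ z (F i) g) l (𝓝 0) ↔ ∀ m, ∀ᶠ i in l, F i m = g m := by
  have hscale := tendsto_const_smul_iff₀ (l := l) (a := 0)
    (f := fun i => ofDigits (disagreementDigits z (F i) g)) (inv_ne_zero (two_ne_zero' ℝ))
  simp only [smul_eq_mul, mul_zero] at hscale
  simp_rw [rhoZ_eq_inv_two_mul_ofDigits]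
  rw [hscale, tendsto_ofDigits_nhds_zero_iff (by norm_num), hz.forall]
  simp only [disagreementDigits_eq_zero_iff]

namespace IsoIsoZ

variable {z : ℕ → ℤ}

theorem apply_eq_mul_inv_mul (hz : Function.Surjective z) (T : IsoIsoZ z) (f h : Perm ℤ) :
    T.1 h = T.1 f * f⁻¹ * h :=
  Perm.eq_mul_inv_mul_of_apply_eq_iff (fun p q => apply_eq_iff_of_rhoZ_eq hz (T.2.2 p q)) f h

def mulLeft (z : ℕ → ℤ) (c : Perm ℤ) : IsoIsoZ z :=
  ⟨(c * ·), mul_left_surjective c, fun p q => by simp [rhoZ, dZ, Perm.mul_apply]⟩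

theorem tendsto_mulLeft_of_tendsto (hz : Function.Surjective z) {ι : Type*} {l : Filter ι}
    (T : ι → IsoIsoZ z) {f g : Perm ℤ} (hfg : Tendsto (fun i => rhoZ z ((T i).1 f) g) l (𝓝 0))
    (h : Perm ℤ) :
    Tendsto (fun i => rhoZ z ((T i).1 h) ((mulLeft z (g * f⁻¹)).1 h)) l (𝓝 0) := by
  rw [tendsto_rhoZ_nhds_zero_iff hz] at hfg ⊢
  intro m
  filter_upwards [hfg (f⁻¹ (h m))] with i hi
  rw [apply_eq_mul_inv_mul hz (T i) f h]
  simpa [mulLeft] using hi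

theorem clusterPW_of_tendsto {ι : Type*} [Nonempty ι] [Preorder ι] [IsDirected ι (· ≤ ·)]
    {T : ι → IsoIsoZ z} {S : IsoIsoZ z}
    (hT : ∀ h, Tendsto (fun i => rhoZ z ((T i).1 h) (S.1 h)) atTop (𝓝 0)) :
    ClusterPW z T S := by
  intro ε hε F
  rw [← frequently_atTop]
  exact ((eventually_all_finset F).2 fun h _ => (hT h).eventually (gt_mem_nhds hε)).frequently

end IsoIsoZ

/-- Proposition 6.6: the evaluation action of `Iso(Iso(ℤ))` on `(Iso(ℤ), ϱ)` is
proper: if `T_n(f) → g` in `(Iso(ℤ), ϱ)` for a sequence `(T_n)` in `Iso(Iso(ℤ))`,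
then `(T_n)` converges pointwise to an element of `Iso(Iso(ℤ))`; in particular, no
net in `Iso(Iso(ℤ))` without convergent subnet (i.e. without cluster point) has
`T_i(f) → g`, so every limit set `L(f)` is empty. -/
theorem isoIsoZ_action_proper (z : ℕ → ℤ) (hz : Function.Bijective z) :
    (∀ (T : ℕ → IsoIsoZ z) (f g : Equiv.Perm ℤ),
      Tendsto (fun n => rhoZ z ((T n).1 f) g) atTop (𝓝 0) →
      ∃ S : IsoIsoZ z, ∀ h : Equiv.Perm ℤ,
        Tendsto (fun n => rhoZ z ((T n).1 h) (S.1 h)) atTop (𝓝 0)) ∧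
    ∀ (ι : Type) [Nonempty ι] [Preorder ι] [IsDirected ι (· ≤ ·)],
      ∀ T : ι → IsoIsoZ z, (∀ S : IsoIsoZ z, ¬ ClusterPW z T S) →
        ∀ f g : Equiv.Perm ℤ,
          ¬ Tendsto (fun i => rhoZ z ((T i).1 f) g) atTop (𝓝 0) := by
  refine ⟨fun T f g hfg => ⟨_, IsoIsoZ.tendsto_mulLeft_of_tendsto hz.2 T hfg⟩, ?_⟩
  intro ι _ _ _ T hT f g hfg
  exact hT _ (IsoIsoZ.clusterPW_of_tendsto (IsoIsoZ.tendsto_mulLeft_of_tendsto hz.2 T hfg))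

end
end

section
/- Let (X,d) be a separable metric space such that the action (Iso(X),X) is Cauchy-indivisible, and suppose the Ellis semigroup E is a group. Then the action of E on X ∪ X_l has a Borel section, i.e., there is a Borel subset S of X ∪ X_l (with its subspace topology) that meets each E-orbit in X ∪ X_l in exactly one point. -/
open Filter Topology Set UniformSpace

noncomputable section

/-- The topology of pointwise convergence on the group of surjective isometries of `X`. -/
instance isoPointwiseTopology (X : Type*) [MetricSpace X] : TopologicalSpace (X ≃ᵢ X) :=
  TopologicalSpace.induced (fun g => (g : X → X)) Pi.topologicalSpace

/-- A net `g` diverges (`g_i → ∞`), i.e. it has no convergent subnet; equivalently,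
no cluster point. -/
def DivergentNet {G : Type*} [TopologicalSpace G] {ι : Type*} [Preorder ι]
    (g : ι → G) : Prop :=
  ∀ h : G, ¬ MapClusterPt h atTop g

/-- A sequence `g` diverges (`g_n → ∞`), i.e. it has no convergent subsequence. -/
def DivergentSeq {G : Type*} [TopologicalSpace G] (g : ℕ → G) : Prop :=
  ∀ φ : ℕ → ℕ, StrictMono φ → ∀ h : G, ¬ Tendsto (g ∘ φ) atTop (𝓝 h)

/-- The natural evaluation action of `Iso(X)` on `X` is Cauchy-indivisible: whenever a
net `g` in `Iso(X)` has no convergent subnet and `(g_i x)` is a Cauchy net for some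
`x`, then `(g_i y)` is a Cauchy net for every `y`. -/
def IsoCauchyIndivisible (X : Type*) [MetricSpace X] : Prop :=
  ∀ (ι : Type*) [Nonempty ι] [Preorder ι] [IsDirected ι (· ≤ ·)],
    ∀ g : ι → X ≃ᵢ X, DivergentNet g →
      (∃ x : X, Cauchy (map (fun i => g i x) atTop)) →
      ∀ y : X, Cauchy (map (fun i => g i y) atTop)

/-- Properness of the isometric evaluation action, expressed through emptiness of all
limit sets `L(x)`: no net in `Iso(X)` without convergent subnet has `(g_i x)`
converging in `X`. -/
def IsoProperLimits (X : Type*) [MetricSpace X] : Prop :=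
  ∀ (ι : Type*) [Nonempty ι] [Preorder ι] [IsDirected ι (· ≤ ·)],
    ∀ g : ι → X ≃ᵢ X, DivergentNet g →
      ∀ x y : X, ¬ Tendsto (fun i => g i x) atTop (𝓝 y)

/-- The canonical lift `ĝ` of an isometry of `X` to the completion `X̂`. -/
def hatIso {X : Type*} [MetricSpace X] (g : X ≃ᵢ X) : Completion X → Completion X :=
  Completion.map (g : X → X)

/-- The lifted group `{ĝ : g ∈ Iso(X)}` inside the selfmaps of `X̂`. -/
def hatIsoSet (X : Type*) [MetricSpace X] : Set (Completion X → Completion X) :=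
  Set.range (hatIso (X := X))

/-- The Ellis semigroup `E`: the closure of the lifted group `{ĝ}` in the topology of
pointwise convergence on selfmaps of `X̂`. -/
def Ellis (X : Type*) [MetricSpace X] : Set (Completion X → Completion X) :=
  closure (hatIsoSet X)

/-- The set `H` of pointwise limits on `X̂` of divergent sequences of lifted isometries. -/
def Hset (X : Type*) [MetricSpace X] : Set (Completion X → Completion X) :=
  { h | Continuous h ∧ ∃ g : ℕ → X ≃ᵢ X, DivergentSeq g ∧
      Tendsto (fun n => hatIso (g n)) atTop (𝓝 h) }

/-- The set `X_l ⊆ X̂` of limit points of the action `(Iso(X), X)` in the completion. -/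
def Xl (X : Type*) [MetricSpace X] : Set (Completion X) :=
  { y | ∃ (g : ℕ → X ≃ᵢ X) (x : X), DivergentSeq g ∧
      CauchySeq (fun n => g n x) ∧
      Tendsto (fun n => ((g n x : X) : Completion X)) atTop (𝓝 y) }

/-- The set `X_p ⊆ X̂` of special limit points of the action `(Iso(X), X)`. -/
def Xp (X : Type*) [MetricSpace X] : Set (Completion X) :=
  { y | ∃ (g : ℕ → X ≃ᵢ X) (x : X), DivergentSeq g ∧
      CauchySeq (fun n => g n x) ∧ CauchySeq (fun n => (g n).symm x) ∧
      Tendsto (fun n => ((g n x : X) : Completion X)) atTop (𝓝 y) }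

/-- `X ∪ X_l`, with `X` identified with its image in the completion `X̂`. -/
def XcupXl (X : Type*) [MetricSpace X] : Set (Completion X) :=
  Set.range ((↑) : X → Completion X) ∪ Xl X

/-- `X ∪ X_p`, with `X` identified with its image in the completion `X̂`. -/
def XcupXp (X : Type*) [MetricSpace X] : Set (Completion X) :=
  Set.range ((↑) : X → Completion X) ∪ Xp X

/-- The Ellis semigroup is a group: every element has a two-sided inverse in `E`
(under composition). -/
def EllisIsGroup (X : Type*) [MetricSpace X] : Prop :=
  ∀ f ∈ Ellis X, ∃ g ∈ Ellis X, f ∘ g = id ∧ g ∘ f = id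


/-!
Every point of `X ∪ X_l` lies in the closure `Ō(x)` of the `Iso(X)`-orbit of some `x ∈ X`.
Cauchy-indivisibility upgrades a sequence with `ĝₙ x → s` to a pointwise limit `f ∈ E` of the
`ĝₙ` with `f x = s`, so `Ō(x) = E x`; as `E` is a group, the sets `Ō(y)`, `y ∈ X ∪ X_l`, are
exactly the `E`-orbits in `X ∪ X_l`, and they are closed in `X̂`. Fix a dense sequence in `X̂` and
select from a nonempty closed set `C` the limit of the centres of the nested balls of radius
`2^{-k-1}` with least index meeting the previous piece of `C`. Since `{y | Ō(y) ∩ V ≠ ∅}` is open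
for open `V`, every step of this construction is Borel in `y`, and the fixed points of
`y ↦ select Ō(y)` form a Borel section.
-/

theorem Filter.map_ulift_down_atTop {α : Type*} (u : ℕ → α) :
    map (fun i : ULift ℕ => u i.down) atTop = map u atTop := by
  rw [← OrderIso.map_atTop (⟨Equiv.ulift, Iff.rfl⟩ : ULift ℕ ≃o ℕ), map_map]
  rfl

theorem cauchySeq_apply_of_denseRange {α β γ : Type*} [PseudoMetricSpace α]
    [PseudoMetricSpace β] {F : ℕ → α → β} (hF : ∀ n, LipschitzWith 1 (F n)) {e : γ → α}
    (he : DenseRange e) (h : ∀ z, CauchySeq fun n => F n (e z)) (a : α) :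
    CauchySeq fun n => F n a := by
  have hF' (n : ℕ) (b c : α) : dist (F n b) (F n c) ≤ dist b c := by
    simpa using (hF n).dist_le_mul b c
  refine Metric.cauchySeq_iff'.2 fun ε hε => ?_
  obtain ⟨z, hz⟩ := Metric.denseRange_iff.1 he a (ε / 3) (by positivity)
  obtain ⟨N, hN⟩ := Metric.cauchySeq_iff'.1 (h z) (ε / 3) (by positivity)
  refine ⟨N, fun n hn => ?_⟩
  calc dist (F n a) (F N a)
      ≤ dist (F n a) (F n (e z)) + dist (F n (e z)) (F N (e z)) + dist (F N (e z)) (F N a) :=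
        dist_triangle4 _ _ _ _
    _ < ε / 3 + ε / 3 + ε / 3 := by
        have h₁ := hF' n a (e z)
        have h₂ := hF' N (e z) a
        rw [dist_comm (e z)] at h₂
        linarith [hN n hn]
    _ = ε := by ring

theorem UniformSpace.Completion.cauchySeq_of_tendsto_coe {α : Type*} [UniformSpace α]
    {u : ℕ → α} {s : Completion α} (hu : Tendsto (fun n => (u n : Completion α)) atTop (𝓝 s)) :
    CauchySeq u := by
  refine (Completion.isUniformInducing_coe α).cauchy_map_iff.1 ?_
  rw [map_map]
  exact hu.cauchySeq

theorem measurable_nat_sInf {α : Type*} [MeasurableSpace α] {T : α → Set ℕ}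
    (hT : ∀ n, MeasurableSet {a | n ∈ T a}) : Measurable fun a => sInf (T a) := by
  refine measurable_to_countable' fun c => ?_
  -- the second part accounts for the junk value `sInf ∅ = 0`
  have hchar : (fun a => sInf (T a)) ⁻¹' {c} =
      ({a | c ∈ T a} ∩ ⋂ k < c, {a | k ∈ T a}ᶜ) ∪ ((⋂ n, {a | n ∈ T a}ᶜ) ∩ {_a | c = 0}) := by
    ext a
    rcases (T a).eq_empty_or_nonempty with h | h
    · simp [h, eq_comm]
    · have hT' : ¬ ∀ n, n ∉ T a := fun hn => h.ne_empty (eq_empty_iff_forall_notMem.2 hn)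
      classical
      simpa [Nat.sInf_def h, hT'] using Nat.find_eq_iff (p := (· ∈ T a)) h
  rw [hchar]
  exact ((hT c).inter (.biInter (to_countable _) fun k _ => (hT k).compl)).union
    ((MeasurableSet.iInter fun n => (hT n).compl).inter (.const _))

namespace BorelSelector

variable {β : Type*} [MetricSpace β] (D : ℕ → β)

def firstCenter (A : Set β) (r : ℝ) : β :=
  D (sInf {n | (A ∩ Metric.ball (D n) r).Nonempty})

def piece (C : Set β) : ℕ → Set β
  | 0 => C
  | k + 1 => piece C k ∩ Metric.ball (firstCenter D (piece C k) (2⁻¹ ^ (k + 1))) (2⁻¹ ^ (k + 1))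

def center (C : Set β) (k : ℕ) : β :=
  firstCenter D (piece D C k) (2⁻¹ ^ (k + 1))

def select [Nonempty β] (C : Set β) : β :=
  limUnder atTop (center D C)

variable {D}

theorem inter_ball_firstCenter_nonempty (hD : DenseRange D) {A : Set β} (hA : A.Nonempty)
    {r : ℝ} (hr : 0 < r) : (A ∩ Metric.ball (firstCenter D A r) r).Nonempty := by
  obtain ⟨z, hz⟩ := hA
  obtain ⟨n, hn⟩ := Metric.denseRange_iff.mp hD z r hr
  exact Nat.sInf_mem (s := {n | (A ∩ Metric.ball (D n) r).Nonempty}) ⟨n, z, hz, hn⟩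

theorem piece_antitone (C : Set β) : Antitone (piece D C) :=
  antitone_nat_of_succ_le fun _ => inter_subset_left

theorem piece_subset (C : Set β) (k : ℕ) : piece D C k ⊆ C :=
  piece_antitone C k.zero_le

theorem piece_subset_ball (C : Set β) {k l : ℕ} (hkl : k < l) :
    piece D C l ⊆ Metric.ball (center D C k) (2⁻¹ ^ (k + 1)) :=
  (piece_antitone C hkl).trans inter_subset_right

theorem piece_nonempty (hD : DenseRange D) {C : Set β} (hC : C.Nonempty) (k : ℕ) :
    (piece D C k).Nonempty := by
  induction k with
  | zero => exact hC
  | succ k ih => exact inter_ball_firstCenter_nonempty hD ih (by positivity)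

theorem exists_mem_tendsto_center [CompleteSpace β] (hD : DenseRange D) {C : Set β}
    (hC : IsClosed C) (hne : C.Nonempty) :
    ∃ p ∈ C, Tendsto (center D C) atTop (𝓝 p) := by
  choose z hz using fun k => piece_nonempty hD hne (k + 2)
  have hdist (k : ℕ) {l : ℕ} (hl : l < k + 2) : dist (center D C l) (z k) < 2⁻¹ ^ (l + 1) := by
    rw [dist_comm]; exact piece_subset_ball C hl (hz k)
  have hcauchy : CauchySeq (center D C) := by
    refine cauchySeq_of_le_geometric_two (C := 2) fun k => ?_
    have h₁ := hdist k (l := k) (by omega)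
    have h₂ := hdist k (l := k + 1) (by omega)
    calc dist (center D C k) (center D C (k + 1))
        ≤ dist (center D C k) (z k) + dist (center D C (k + 1)) (z k) := dist_triangle_right _ _ _
      _ ≤ 2⁻¹ ^ (k + 1) + 2⁻¹ ^ (k + 1 + 1) := by linarith
      _ ≤ 2⁻¹ ^ k := by
        rw [pow_succ, pow_succ, pow_succ]; nlinarith [pow_pos (by norm_num : (0 : ℝ) < 2⁻¹) k]
      _ = 2 / 2 / 2 ^ k := by rw [inv_pow]; ring
  obtain ⟨p, hp⟩ := cauchySeq_tendsto_of_complete hcauchy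
  have hzp : Tendsto z atTop (𝓝 p) := by
    refine hp.congr_dist (squeeze_zero (fun _ => dist_nonneg) (fun k => (hdist k (by omega)).le) ?_)
    exact (tendsto_pow_atTop_nhds_zero_of_lt_one (by norm_num) (by norm_num)).comp
      (tendsto_add_atTop_nat 1)
  exact ⟨p, hC.mem_of_tendsto hzp (Eventually.of_forall fun k => piece_subset C _ (hz k)), hp⟩

theorem tendsto_center_select [Nonempty β] [CompleteSpace β] (hD : DenseRange D) {C : Set β}
    (hC : IsClosed C) (hne : C.Nonempty) : Tendsto (center D C) atTop (𝓝 (select D C)) := by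
  obtain ⟨p, -, hp⟩ := exists_mem_tendsto_center hD hC hne
  exact tendsto_nhds_limUnder ⟨p, hp⟩

theorem select_mem [Nonempty β] [CompleteSpace β] (hD : DenseRange D) {C : Set β}
    (hC : IsClosed C) (hne : C.Nonempty) : select D C ∈ C := by
  obtain ⟨p, hpC, hp⟩ := exists_mem_tendsto_center hD hC hne
  rwa [tendsto_nhds_unique (tendsto_center_select hD hC hne) hp]

section Measurability

variable {α : Type*} [MeasurableSpace α]

theorem measurable_firstCenter [MeasurableSpace β] (D : ℕ → β) {A : α → Set β}
    (hA : ∀ V, IsOpen V → MeasurableSet {a | (A a ∩ V).Nonempty}) (r : ℝ) :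
    Measurable fun a => firstCenter D (A a) r :=
  measurable_from_nat.comp (measurable_nat_sInf fun _ => hA _ Metric.isOpen_ball)

theorem measurableSet_piece_inter_nonempty {C : α → Set β}
    (hC : ∀ V, IsOpen V → MeasurableSet {a | (C a ∩ V).Nonempty}) (k : ℕ) :
    ∀ V, IsOpen V → MeasurableSet {a | (piece D (C a) k ∩ V).Nonempty} := by
  induction k with
  | zero => exact hC
  | succ k ih =>
    intro V hV
    let i a := sInf {n | (piece D (C a) k ∩ Metric.ball (D n) (2⁻¹ ^ (k + 1))).Nonempty}
    have hi : Measurable i := measurable_nat_sInf fun _ => ih _ Metric.isOpen_ball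
    have hsplit : {a | (piece D (C a) (k + 1) ∩ V).Nonempty} = ⋃ n, i ⁻¹' {n} ∩
        {a | (piece D (C a) k ∩ (Metric.ball (D n) (2⁻¹ ^ (k + 1)) ∩ V)).Nonempty} := by
      ext a
      simp only [piece, firstCenter, inter_assoc, mem_ofPred_eq, mem_iUnion, mem_inter_iff,
        mem_preimage, mem_singleton_iff, exists_eq_left', i]
    rw [hsplit]
    exact .iUnion fun n =>
      (hi (measurableSet_singleton n)).inter (ih _ (Metric.isOpen_ball.inter hV))

theorem measurable_select [MeasurableSpace β] [Nonempty β] [CompleteSpace β] [BorelSpace β]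
    (hD : DenseRange D) {C : α → Set β}
    (hC : ∀ V, IsOpen V → MeasurableSet {a | (C a ∩ V).Nonempty})
    (hcl : ∀ a, IsClosed (C a)) (hne : ∀ a, (C a).Nonempty) :
    Measurable fun a => select D (C a) :=
  measurable_of_tendsto_metrizable
    (fun k => measurable_firstCenter D (measurableSet_piece_inter_nonempty hC k) _)
    (tendsto_pi_nhds.2 fun a => tendsto_center_select hD (hcl a) (hne a))

end Measurability

end BorelSelector

section IsometryGroup

variable {X : Type*} [MetricSpace X]

theorem IsometryEquiv.isInducing_restrict_of_dense {s : Set X} (hs : Dense s) :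
    IsInducing fun (g : X ≃ᵢ X) (x : s) => g x := by
  set Φ : (X ≃ᵢ X) → s → X := fun g x => g x
  have hcoe : IsInducing fun g : X ≃ᵢ X => (g : X → X) := ⟨rfl⟩
  have hΦ : Continuous Φ := continuous_pi fun x => (continuous_apply (x : X)).comp hcoe.continuous
  refine isInducing_iff_nhds.2 fun h => le_antisymm (hΦ.tendsto h).le_comap ?_
  rw [← tendsto_id', hcoe.tendsto_nhds_iff, tendsto_pi_nhds]
  -- isometries are equicontinuous, so convergence on `s` propagates to `closure s`
  have hclosed := (LipschitzWith.uniformEquicontinuous (fun g : X ≃ᵢ X => (g : X → X)) 1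
    fun g => g.isometry.lipschitz).equicontinuous.isClosed_setOfPred_tendsto
      (l := comap Φ (𝓝 (Φ h))) h.continuous
  have hsub : s ⊆ {x | Tendsto (fun g : X ≃ᵢ X => g x) (comap Φ (𝓝 (Φ h))) (𝓝 (h x))} :=
    fun y hy => tendsto_pi_nhds.1 (tendsto_comap : Tendsto Φ _ (𝓝 (Φ h))) ⟨y, hy⟩
  exact fun x => hclosed.closure_subset_iff.2 hsub (hs x)

instance IsometryEquiv.firstCountableTopology [TopologicalSpace.SeparableSpace X] :
    FirstCountableTopology (X ≃ᵢ X) := by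
  obtain ⟨s, hsc, hs⟩ := TopologicalSpace.exists_countable_dense X
  have : Countable s := hsc.to_subtype
  exact (IsometryEquiv.isInducing_restrict_of_dense hs).firstCountableTopology

theorem DivergentSeq.divergentNet [TopologicalSpace.SeparableSpace X] {g : ℕ → X ≃ᵢ X}
    (hg : DivergentSeq g) : DivergentNet g := fun h hc => by
  obtain ⟨φ, hφ, hlim⟩ := hc.tendsto_subseq
  exact hg φ hφ h hlim

theorem IsoCauchyIndivisible.cauchySeq_apply (hCI : IsoCauchyIndivisible X) {g : ℕ → X ≃ᵢ X}
    (hg : DivergentNet g) {x : X} (hx : CauchySeq fun n => g n x) (z : X) :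
    CauchySeq fun n => g n z := by
  -- `hCI` speaks about nets indexed in one fixed universe, so `g` is reindexed by `ULift ℕ`.
  have hdiv : DivergentNet fun i : ULift ℕ => g i.down := fun h hc =>
    hg h (by rwa [MapClusterPt, map_ulift_down_atTop g] at hc)
  have hx' : Cauchy (map (fun i : ULift ℕ => g i.down x) atTop) := by
    rwa [map_ulift_down_atTop fun n => g n x]
  have hz := hCI (ULift ℕ) _ hdiv ⟨x, hx'⟩ z
  rwa [map_ulift_down_atTop fun n => g n z] at hz

end IsometryGroup

section Ellis

variable {X : Type*} [MetricSpace X]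

theorem hatIso_coe (g : X ≃ᵢ X) (x : X) : hatIso g x = ((g x : X) : Completion X) :=
  Completion.map_coe g.isometry.uniformContinuous x

theorem isometry_hatIso (g : X ≃ᵢ X) : Isometry (hatIso g) :=
  g.isometry.completion_map

theorem hatIso_refl : hatIso (IsometryEquiv.refl X) = id :=
  Completion.map_id

theorem hatIso_comp (g h : X ≃ᵢ X) : hatIso g ∘ hatIso h = hatIso (h.trans g) :=
  Completion.map_comp g.isometry.uniformContinuous h.isometry.uniformContinuous

namespace Ellis

theorem hatIso_mem (g : X ≃ᵢ X) : hatIso g ∈ Ellis X :=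
  subset_closure ⟨g, rfl⟩

theorem isometry_of_mem {f : Completion X → Completion X} (hf : f ∈ Ellis X) : Isometry f := by
  refine Isometry.of_dist_eq fun a b => ?_
  have hclosed : IsClosed {F : Completion X → Completion X | dist (F a) (F b) = dist a b} :=
    isClosed_eq ((continuous_apply a).dist (continuous_apply b)) continuous_const
  refine closure_minimal ?_ hclosed hf
  rintro _ ⟨g, rfl⟩
  exact (isometry_hatIso g).dist_eq a b

theorem comp_mem {f g : Completion X → Completion X} (hf : f ∈ Ellis X) (hg : g ∈ Ellis X) :
    f ∘ g ∈ Ellis X := by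
  have hmaps : MapsTo (f ∘ ·) (hatIsoSet X) (Ellis X) := by
    rintro _ ⟨h, rfl⟩
    refine map_mem_closure (f := (· ∘ hatIso h)) (continuous_pi fun a => continuous_apply _) hf ?_
    rintro _ ⟨k, rfl⟩
    exact ⟨h.trans k, (hatIso_comp k h).symm⟩
  have hcont : Continuous (f ∘ · : (Completion X → Completion X) → _) :=
    continuous_pi fun a => (isometry_of_mem hf).continuous.comp (continuous_apply a)
  simpa only [Ellis, closure_closure] using map_mem_closure hcont hg hmaps

theorem exists_mem_tendsto_hatIso {g : ℕ → X ≃ᵢ X} (h : ∀ z, CauchySeq fun n => g n z) :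
    ∃ f ∈ Ellis X, Tendsto (fun n => hatIso (g n)) atTop (𝓝 f) := by
  have hcoe (z : X) : CauchySeq fun n => hatIso (g n) z := by
    simp only [hatIso_coe]
    exact (Completion.uniformContinuous_coe X).comp_cauchySeq (h z)
  have hcauchy := cauchySeq_apply_of_denseRange (fun n => (isometry_hatIso (g n)).lipschitz)
    Completion.denseRange_coe hcoe
  choose f hf using fun a => cauchySeq_tendsto_of_complete (hcauchy a)
  have hlim : Tendsto (fun n => hatIso (g n)) atTop (𝓝 f) := tendsto_pi_nhds.2 hf
  exact ⟨f, mem_closure_of_tendsto hlim (Eventually.of_forall fun n => ⟨g n, rfl⟩), hlim⟩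

end Ellis

open Ellis

def isoOrbitClosure (y : Completion X) : Set (Completion X) :=
  closure (range fun g : X ≃ᵢ X => hatIso g y)

theorem isClosed_isoOrbitClosure (y : Completion X) : IsClosed (isoOrbitClosure y) :=
  isClosed_closure

theorem mem_isoOrbitClosure_self (y : Completion X) : y ∈ isoOrbitClosure y :=
  subset_closure ⟨.refl X, by simp only [hatIso_refl, id]⟩

theorem apply_mem_isoOrbitClosure {f : Completion X → Completion X} (hf : f ∈ Ellis X)
    (y : Completion X) : f y ∈ isoOrbitClosure y :=
  map_mem_closure (f := fun F => F y) (continuous_apply y) hf (by rintro _ ⟨g, rfl⟩; exact ⟨g, rfl⟩)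

theorem isoOrbitClosure_apply_subset {f : Completion X → Completion X} (hf : f ∈ Ellis X)
    (y : Completion X) : isoOrbitClosure (f y) ⊆ isoOrbitClosure y := by
  refine closure_minimal ?_ (isClosed_isoOrbitClosure y)
  rintro _ ⟨g, rfl⟩
  exact apply_mem_isoOrbitClosure (comp_mem (hatIso_mem g) hf) y

theorem isOpen_setOf_isoOrbitClosure_inter_nonempty {V : Set (Completion X)} (hV : IsOpen V) :
    IsOpen {y | (isoOrbitClosure y ∩ V).Nonempty} := by
  have hunion : {y | (isoOrbitClosure y ∩ V).Nonempty} = ⋃ g : X ≃ᵢ X, hatIso g ⁻¹' V := by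
    ext y
    rw [mem_ofPred_eq, isoOrbitClosure, closure_inter_open_nonempty_iff hV]
    simp [Set.Nonempty]
  rw [hunion]
  exact isOpen_iUnion fun g => hV.preimage (isometry_hatIso g).continuous

theorem exists_tendsto_of_mem_isoOrbitClosure {x : X} {s : Completion X}
    (hs : s ∈ isoOrbitClosure (x : Completion X)) :
    ∃ g : ℕ → X ≃ᵢ X, Tendsto (fun n => ((g n x : X) : Completion X)) atTop (𝓝 s) := by
  obtain ⟨u, hu, hlim⟩ := mem_closure_iff_seq_limit.1 hs
  choose g hg using hu
  refine ⟨g, ?_⟩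
  simpa only [← hatIso_coe, hg] using hlim

theorem exists_coe_apply_eq_of_not_divergentSeq {g : ℕ → X ≃ᵢ X} (hg : ¬ DivergentSeq g)
    {x : X} {s : Completion X} (hs : Tendsto (fun n => ((g n x : X) : Completion X)) atTop (𝓝 s)) :
    ∃ h : X ≃ᵢ X, ((h x : X) : Completion X) = s := by
  simp only [DivergentSeq, not_forall, not_not] at hg
  obtain ⟨φ, hφ, h, hlim⟩ := hg
  have heval : Continuous fun k : X ≃ᵢ X => ((k x : X) : Completion X) :=
    (Completion.continuous_coe X).comp ((continuous_apply x).comp continuous_induced_dom)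
  exact ⟨h, tendsto_nhds_unique ((heval.tendsto h).comp hlim) (hs.comp hφ.tendsto_atTop)⟩

theorem isoOrbitClosure_coe_subset (x : X) : isoOrbitClosure (x : Completion X) ⊆ XcupXl X := by
  intro s hs
  obtain ⟨g, hg⟩ := exists_tendsto_of_mem_isoOrbitClosure hs
  by_cases hdiv : DivergentSeq g
  · exact Or.inr ⟨g, x, hdiv, Completion.cauchySeq_of_tendsto_coe hg, hg⟩
  · obtain ⟨h, rfl⟩ := exists_coe_apply_eq_of_not_divergentSeq hdiv hg
    exact Or.inl ⟨h x, rfl⟩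

theorem exists_coe_mem_isoOrbitClosure {y : Completion X} (hy : y ∈ XcupXl X) :
    ∃ x : X, y ∈ isoOrbitClosure (x : Completion X) := by
  rcases hy with ⟨x, rfl⟩ | ⟨g, x, -, -, hlim⟩
  · exact ⟨x, mem_isoOrbitClosure_self _⟩
  · exact ⟨x, mem_closure_of_tendsto hlim (Eventually.of_forall fun n => ⟨g n, hatIso_coe _ _⟩)⟩

variable [TopologicalSpace.SeparableSpace X]

theorem Ellis.exists_apply_coe_eq (hCI : IsoCauchyIndivisible X) {x : X} {s : Completion X}
    (hs : s ∈ isoOrbitClosure (x : Completion X)) : ∃ f ∈ Ellis X, f x = s := by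
  obtain ⟨g, hg⟩ := exists_tendsto_of_mem_isoOrbitClosure hs
  by_cases hdiv : DivergentSeq g
  · obtain ⟨f, hf, hlim⟩ := exists_mem_tendsto_hatIso
      (hCI.cauchySeq_apply hdiv.divergentNet (Completion.cauchySeq_of_tendsto_coe hg))
    refine ⟨f, hf, tendsto_nhds_unique ?_ hg⟩
    simpa only [hatIso_coe] using tendsto_pi_nhds.1 hlim x
  · obtain ⟨h, rfl⟩ := exists_coe_apply_eq_of_not_divergentSeq hdiv hg
    exact ⟨hatIso h, hatIso_mem h, hatIso_coe h x⟩

theorem Ellis.exists_apply_eq (hCI : IsoCauchyIndivisible X) (hgrp : EllisIsGroup X) {x : X}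
    {y s : Completion X} (hy : y ∈ isoOrbitClosure (x : Completion X))
    (hs : s ∈ isoOrbitClosure (x : Completion X)) : ∃ f ∈ Ellis X, f y = s := by
  obtain ⟨f₁, hf₁, rfl⟩ := exists_apply_coe_eq hCI hy
  obtain ⟨f₂, hf₂, rfl⟩ := exists_apply_coe_eq hCI hs
  obtain ⟨f₁', hf₁', -, hinv⟩ := hgrp f₁ hf₁
  exact ⟨f₂ ∘ f₁', comp_mem hf₂ hf₁', congrArg f₂ (congrFun hinv x)⟩

theorem isoOrbitClosure_eq_of_mem (hCI : IsoCauchyIndivisible X) (hgrp : EllisIsGroup X) {x : X}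
    {s : Completion X} (hs : s ∈ isoOrbitClosure (x : Completion X)) :
    isoOrbitClosure s = isoOrbitClosure (x : Completion X) := by
  obtain ⟨f, hf, rfl⟩ := exists_apply_coe_eq hCI hs
  obtain ⟨f', hf', hf'x⟩ := exists_apply_eq hCI hgrp hs (mem_isoOrbitClosure_self _)
  refine (isoOrbitClosure_apply_subset hf _).antisymm ?_
  simpa only [hf'x] using isoOrbitClosure_apply_subset hf' (f x)

end Ellis

open Ellis BorelSelector in
/-- Proposition 7.1: if the Ellis semigroup `E` is a group, then the action of `E` on
`X ∪ X_l` has a Borel section: a Borel subset of `X ∪ X_l` (with the subspace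
topology) meeting every `E`-orbit in exactly one point. -/
theorem ellis_action_has_borel_section (X : Type*) [MetricSpace X]
    [TopologicalSpace.SeparableSpace X] (hCI : IsoCauchyIndivisible X)
    (hgrp : EllisIsGroup X) :
    ∃ S : Set ↥(XcupXl X), @MeasurableSet _ (borel ↥(XcupXl X)) S ∧
      ∀ y : ↥(XcupXl X), ∃! s : ↥(XcupXl X), s ∈ S ∧
        ∃ f ∈ Ellis X, f (y : Completion X) = (s : Completion X) := by
  rcases isEmpty_or_nonempty (Completion X) with hX | hX
  · exact ⟨∅, @MeasurableSet.empty _ (borel _), fun y => isEmptyElim (y : Completion X)⟩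
  borelize (Completion X)
  let := borel (XcupXl X)
  have : BorelSpace (XcupXl X) := ⟨rfl⟩
  set D := TopologicalSpace.denseSeq (Completion X)
  have hD : DenseRange D := TopologicalSpace.denseRange_denseSeq _
  have hsel : Measurable fun y => select D (isoOrbitClosure y) :=
    measurable_select hD
      (fun _ hV => (isOpen_setOf_isoOrbitClosure_inter_nonempty hV).measurableSet)
      isClosed_isoOrbitClosure fun y => ⟨y, mem_isoOrbitClosure_self y⟩
  refine ⟨Subtype.val ⁻¹' {y | select D (isoOrbitClosure y) = y},
    continuous_subtype_val.measurable (measurableSet_eq_fun hsel measurable_id), fun y => ?_⟩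
  obtain ⟨x, hyx⟩ := exists_coe_mem_isoOrbitClosure y.2
  have hp := select_mem hD (isClosed_isoOrbitClosure _)
    ⟨_, mem_isoOrbitClosure_self (x : Completion X)⟩
  refine ⟨⟨_, isoOrbitClosure_coe_subset x hp⟩, ⟨?_, exists_apply_eq hCI hgrp hyx hp⟩, ?_⟩
  · show select D _ = _
    rw [isoOrbitClosure_eq_of_mem hCI hgrp hp]
  · rintro ⟨_, _⟩ ⟨hq, f, hf, rfl : f y = _⟩
    have hfy : f y ∈ isoOrbitClosure (x : Completion X) :=
      isoOrbitClosure_eq_of_mem hCI hgrp hyx ▸ apply_mem_isoOrbitClosure hf y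
    refine Subtype.ext (hq.symm.trans ?_)
    show select D _ = _
    rw [isoOrbitClosure_eq_of_mem hCI hgrp hfy]

end
end

section
/- Let G be a locally compact group acting properly and continuously on a locally compact Hausdorff space X, suppose the orbit space G\X is paracompact, and let S be a section for the action (G,X). Then: (i) for every open neighborhood U of S there exist a closed fundamental set F_c and an open fundamental set F_o with F_c ⊆ F_o ⊆ U; (ii) if moreover (X,d) is a separable metric space, then there exists a Borel section S_B which is also a fundamental set and satisfies S_B ⊆ F_c ⊆ F_o ⊆ U. -/
/-!
Write `π : X → G\X` for the orbit map. Around every point of `U` pick relatively compact open sets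
`V`, `V'` with `closure V ⊆ V' ⊆ U`. The sets `π V` cover the paracompact space `G\X`; refine them
to a locally finite open cover `W` and shrink it to `W'` with `closure W' ⊆ W`. Then
`F_o = ⋃ V' ∩ π⁻¹ W` and `F_c = ⋃ closure V ∩ π⁻¹ (closure W')` work: a compact neighbourhood
meets only finitely many `π⁻¹ W`, and properness makes transporters between compact sets compact.

A closed fundamental set meets each orbit in a nonempty compact set. Enumerate closed sets `C n`
separating points and shrink `F_c`, orbit by orbit, to its part in `C n` whenever that part is
nonempty. The intersection of all stages meets each orbit in exactly one point, and it is Borel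
because the saturation of a closed set is a countable union of saturations of compact sets, which
are closed since `G\X` is Hausdorff.
-/

open Filter Topology Set

/-- The transporter `G_{AB} = { g ∈ G : gA ∩ B ≠ ∅ }` from `A` to `B`. -/
def Transporter (G : Type*) {X : Type*} [SMul G X] (A B : Set X) : Set G :=
  { g : G | ∃ a ∈ A, g • a ∈ B }

/-- A fundamental set for the action of `G` on `X`: `GF = X`, and every point has a
neighborhood `V` whose transporter to `F` has compact closure in `G`. -/
def IsFundamentalSet (G : Type*) {X : Type*} [TopologicalSpace G] [TopologicalSpace X]
    [SMul G X] (F : Set X) : Prop :=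
  (∀ x : X, ∃ g : G, ∃ y ∈ F, g • y = x) ∧
  ∀ x : X, ∃ V ∈ 𝓝 x, IsCompact (closure (Transporter G V F))

open MulAction MeasureTheory

section Transporter

variable {G X : Type*} [Group G] [MulAction G X]

theorem transporter_mono {A A' B B' : Set X} (hA : A ⊆ A') (hB : B ⊆ B') :
    Transporter G A B ⊆ Transporter G A' B' :=
  fun _ ⟨a, ha, hb⟩ => ⟨a, hA ha, hB hb⟩

variable [TopologicalSpace G] [TopologicalSpace X]

theorem isCompact_transporter [ProperSMul G X] {K L : Set X} (hK : IsCompact K)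
    (hL : IsCompact L) : IsCompact (Transporter G K L) := by
  convert ProperSMul.isCompact_setOfPred_inter_nonempty (G := G) hK hL using 1
  ext g
  simp [Transporter, Set.Nonempty, Set.mem_smul_set]

theorem IsFundamentalSet.mono {F F' : Set X} (hF : IsFundamentalSet G F) (hF' : F' ⊆ F)
    (hcov : ∀ x : X, ∃ g : G, ∃ y ∈ F', g • y = x) : IsFundamentalSet G F' := by
  refine ⟨hcov, fun x => ?_⟩
  obtain ⟨V, hV, hVF⟩ := hF.2 x
  exact ⟨V, hV, hVF.of_isClosed_subset isClosed_closure
    (closure_mono (transporter_mono subset_rfl hF'))⟩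

theorem IsFundamentalSet.isCompact_inter_orbit [ContinuousSMul G X] {F : Set X}
    (hF : IsFundamentalSet G F) (hcl : IsClosed F) (x : X) :
    IsCompact (F ∩ orbit G x) := by
  obtain ⟨V, hV, hVF⟩ := hF.2 x
  have hstab : IsCompact ((· • x) ⁻¹' F : Set G) :=
    hVF.of_isClosed_subset (hcl.preimage (continuous_id.smul continuous_const))
      fun g hg => subset_closure ⟨x, mem_of_mem_nhds hV, hg⟩
  rw [show F ∩ orbit G x = (· • x) '' ((· • x) ⁻¹' F) from image_preimage_eq_inter_range.symm]
  exact hstab.image (continuous_id.smul continuous_const)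

end Transporter

namespace MulAction

variable {G X : Type*} [Group G] [MulAction G X]

local notation "π" => Quotient.mk (orbitRel G X)

theorem mk_eq_mk_iff_mem_orbit {x y : X} : π y = π x ↔ y ∈ orbit G x :=
  Quotient.eq.trans orbitRel_apply

theorem preimage_mk_singleton_mk (x : X) : π ⁻¹' {π x} = orbit G x :=
  ext fun _ => mk_eq_mk_iff_mem_orbit

theorem exists_smul_eq_of_mk_eq {x y : X} (h : π y = π x) : ∃ g : G, g • y = x :=
  mk_eq_mk_iff_mem_orbit.1 h.symm

end MulAction

section FiberRestrict

variable {X Q : Type*} (π : X → Q)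

/-- Inside each fiber of `π`, shrink `A` to `A ∩ C` unless that leaves nothing of the fiber. -/
def fiberRestrict (A C : Set X) : Set X :=
  A ∩ C ∪ A \ π ⁻¹' (π '' (A ∩ C))

def fiberRestrictSeq (F : Set X) (C : ℕ → Set X) : ℕ → Set X
  | 0 => F
  | n + 1 => fiberRestrict π (fiberRestrictSeq F C n) (C n)

variable {π}

theorem fiberRestrict_subset (A C : Set X) : fiberRestrict π A C ⊆ A :=
  union_subset inter_subset_left sdiff_subset

theorem mem_of_mem_fiberRestrict {A C : Set X} {y s : X} (hy : y ∈ A ∩ C)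
    (hs : s ∈ fiberRestrict π A C) (hys : π y = π s) : s ∈ C := by
  rcases hs with hs | ⟨-, hs⟩
  · exact hs.2
  · exact absurd ⟨y, hy, hys⟩ hs

theorem fiberRestrict_inter_fiber_of_nonempty {A C : Set X} {q : Q}
    (h : (A ∩ C ∩ π ⁻¹' {q}).Nonempty) :
    fiberRestrict π A C ∩ π ⁻¹' {q} = A ∩ C ∩ π ⁻¹' {q} := by
  obtain ⟨y, hy, hyq⟩ := h
  ext z
  exact ⟨fun ⟨hz, hzq⟩ => ⟨⟨fiberRestrict_subset A C hz,
      mem_of_mem_fiberRestrict hy hz (hyq.trans hzq.symm)⟩, hzq⟩,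
    fun ⟨hz, hzq⟩ => ⟨Or.inl hz, hzq⟩⟩

theorem fiberRestrict_inter_fiber_of_not_nonempty {A C : Set X} {q : Q}
    (h : ¬(A ∩ C ∩ π ⁻¹' {q}).Nonempty) :
    fiberRestrict π A C ∩ π ⁻¹' {q} = A ∩ π ⁻¹' {q} := by
  ext z
  refine ⟨fun ⟨hz, hzq⟩ => ⟨fiberRestrict_subset A C hz, hzq⟩,
    fun ⟨hz, hzq⟩ => ⟨Or.inr ⟨hz, ?_⟩, hzq⟩⟩
  rintro ⟨y, hy, hyz⟩
  exact h ⟨y, hy, hyz.trans hzq⟩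

theorem image_fiberRestrict_inter (A C K : Set X) :
    π '' (fiberRestrict π A C ∩ K) = π '' (A ∩ C ∩ K) ∪ (π '' (A ∩ K) \ π '' (A ∩ C)) := by
  ext q
  constructor
  · rintro ⟨z, ⟨⟨hzA, hzC⟩ | ⟨hzA, hz⟩, hzK⟩, rfl⟩
    · exact Or.inl ⟨z, ⟨⟨hzA, hzC⟩, hzK⟩, rfl⟩
    · exact Or.inr ⟨⟨z, ⟨hzA, hzK⟩, rfl⟩, hz⟩
  · rintro (⟨z, ⟨hz, hzK⟩, rfl⟩ | ⟨⟨z, ⟨hzA, hzK⟩, rfl⟩, hz⟩)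
    · exact ⟨z, ⟨Or.inl hz, hzK⟩, rfl⟩
    · exact ⟨z, ⟨Or.inr ⟨hzA, hz⟩, hzK⟩, rfl⟩

theorem fiberRestrictSeq_succ_subset (F : Set X) (C : ℕ → Set X) (n : ℕ) :
    fiberRestrictSeq π F C (n + 1) ⊆ fiberRestrictSeq π F C n :=
  fiberRestrict_subset _ _

variable [TopologicalSpace X]

theorem fiberRestrictSeq_inter_fiber {F : Set X} {C : ℕ → Set X}
    (hC : ∀ n, IsClosed (C n)) {q : Q} (hne : (F ∩ π ⁻¹' {q}).Nonempty)
    (hcpt : IsCompact (F ∩ π ⁻¹' {q})) (n : ℕ) :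
    (fiberRestrictSeq π F C n ∩ π ⁻¹' {q}).Nonempty ∧
      IsCompact (fiberRestrictSeq π F C n ∩ π ⁻¹' {q}) := by
  induction n with
  | zero => exact ⟨hne, hcpt⟩
  | succ n ih =>
    rw [fiberRestrictSeq]
    by_cases h : (fiberRestrictSeq π F C n ∩ C n ∩ π ⁻¹' {q}).Nonempty
    · rw [fiberRestrict_inter_fiber_of_nonempty h, inter_right_comm]
      exact ⟨inter_right_comm _ (C n) _ ▸ h, ih.2.inter_right (hC n)⟩
    · rwa [fiberRestrict_inter_fiber_of_not_nonempty h]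

variable [TopologicalSpace Q] [T2Space Q] [MeasurableSpace X] [OpensMeasurableSpace X]
  [SigmaCompactSpace X]

theorem measurableSet_preimage_image_of_isClosed (hπ : Continuous π) {K : Set X}
    (hK : IsClosed K) : MeasurableSet (π ⁻¹' (π '' K)) := by
  have hKcov : K = ⋃ n, K ∩ compactCovering X n := by
    rw [← inter_iUnion, iUnion_compactCovering, inter_univ]
  rw [hKcov, image_iUnion, preimage_iUnion]
  exact MeasurableSet.iUnion fun n =>
    ((((isCompact_compactCovering X n).inter_left hK).image hπ).isClosed.preimage hπ).measurableSet

theorem measurableSet_fiberRestrictSeq (hπ : Continuous π) {F : Set X} (hF : IsClosed F)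
    {C : ℕ → Set X} (hC : ∀ n, IsClosed (C n)) (n : ℕ) :
    MeasurableSet (fiberRestrictSeq π F C n) ∧
      ∀ K, IsClosed K → MeasurableSet (π ⁻¹' (π '' (fiberRestrictSeq π F C n ∩ K))) := by
  induction n with
  | zero =>
    exact ⟨hF.measurableSet, fun K hK => measurableSet_preimage_image_of_isClosed hπ (hF.inter hK)⟩
  | succ n ih =>
    obtain ⟨hA, hAsat⟩ := ih
    have hAC := hAsat (C n) (hC n)
    refine ⟨(hA.inter (hC n).measurableSet).union (hA.diff hAC), fun K hK => ?_⟩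
    rw [fiberRestrictSeq, image_fiberRestrict_inter, preimage_union, preimage_sdiff, inter_assoc]
    exact (hAsat _ ((hC n).inter hK)).union ((hAsat K hK).diff hAC)

theorem exists_measurableSet_section_of_isCompact_inter_fiber [T2Space X]
    [SecondCountableTopology X] (hπ : Continuous π) {F : Set X} (hF : IsClosed F)
    (hne : ∀ x, (F ∩ π ⁻¹' {π x}).Nonempty) (hcpt : ∀ x, IsCompact (F ∩ π ⁻¹' {π x})) :
    ∃ S ⊆ F, MeasurableSet S ∧ ∀ x, ∃! s, s ∈ S ∧ π s = π x := by
  obtain ⟨C, hC, hCsep⟩ := exists_seq_separating X isClosed_empty univ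
  set A := fiberRestrictSeq π F C
  have hfiber x := fiberRestrictSeq_inter_fiber hC (hne x) (hcpt x)
  refine ⟨⋂ n, A n, iInter_subset A 0,
    MeasurableSet.iInter fun n => (measurableSet_fiberRestrictSeq hπ hF hC n).1, fun x => ?_⟩
  obtain ⟨s, hs⟩ : (⋂ n, A n ∩ π ⁻¹' {π x}).Nonempty :=
    IsCompact.nonempty_iInter_of_sequence_nonempty_isCompact_isClosed _
      (fun n => inter_subset_inter_left _ (fiberRestrictSeq_succ_subset F C n))
      (fun n => (hfiber x n).1) (hfiber x 0).2 fun n => (hfiber x n).2.isClosed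
  rw [← iInter_inter, mem_inter_iff] at hs
  refine ⟨s, hs, fun y ⟨hy, hyx⟩ => hCsep y trivial s trivial fun n => ?_⟩
  have hys : π y = π s := hyx.trans hs.2.symm
  have hA m : ∀ z ∈ ⋂ n, A n, z ∈ A m := fun z hz => mem_iInter.1 hz m
  exact ⟨fun h => mem_of_mem_fiberRestrict ⟨hA n y hy, h⟩ (hA (n + 1) s hs.1) hys,
    fun h => mem_of_mem_fiberRestrict ⟨hA n s hs.1, h⟩ (hA (n + 1) y hy) hys.symm⟩

end FiberRestrict

section FundamentalSets

variable {G X : Type*} [Group G] [TopologicalSpace G] [TopologicalSpace X] [MulAction G X]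
  [ProperSMul G X]

local notation "π" => Quotient.mk (orbitRel G X)

theorem IsFundamentalSet.exists_measurableSet_section [T2Space X] [LocallyCompactSpace X]
    [SecondCountableTopology X] [MeasurableSpace X] [BorelSpace X] {F : Set X}
    (hF : IsFundamentalSet G F) (hcl : IsClosed F) :
    ∃ S ⊆ F, MeasurableSet S ∧ (∀ x : X, ∃! s : X, s ∈ S ∧ s ∈ orbit G x) ∧
      IsFundamentalSet G S := by
  have hne (x : X) : (F ∩ π ⁻¹' {π x}).Nonempty := by
    obtain ⟨g, y, hy, hgy⟩ := hF.1 x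
    exact ⟨y, hy, (mk_eq_mk_iff_mem_orbit.2 (hgy ▸ mem_orbit y g)).symm⟩
  have hcpt (x : X) : IsCompact (F ∩ π ⁻¹' {π x}) := by
    rw [preimage_mk_singleton_mk]
    exact hF.isCompact_inter_orbit hcl x
  have hπ : Continuous π := continuous_quotient_mk'
  obtain ⟨S, hSF, hS, hsec⟩ :=
    exists_measurableSet_section_of_isCompact_inter_fiber hπ hcl hne hcpt
  simp only [mk_eq_mk_iff_mem_orbit] at hsec
  refine ⟨S, hSF, hS, hsec, hF.mono hSF fun x => ?_⟩
  obtain ⟨s, ⟨hs, hsx⟩, -⟩ := hsec x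
  obtain ⟨g, hg⟩ := exists_smul_eq_of_mk_eq (mk_eq_mk_iff_mem_orbit.2 hsx)
  exact ⟨g, s, hs, hg⟩

variable [IsTopologicalGroup G]

theorem exists_mem_nhds_isCompact_closure_transporter_iUnion [LocallyCompactSpace X]
    {ι : Type*} {W : ι → Set (Quotient (orbitRel G X))} (hW : LocallyFinite W)
    {D : ι → Set X} (hD : ∀ i, IsCompact (closure (D i))) (x : X) :
    ∃ V ∈ 𝓝 x, IsCompact (closure (Transporter G V (⋃ i, D i ∩ π ⁻¹' W i))) := by
  obtain ⟨K, hK, hKx⟩ := exists_compact_mem_nhds x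
  set I := {i | (W i ∩ π '' K).Nonempty}
  have hI : I.Finite := hW.finite_nonempty_inter_compact (hK.image continuous_quot_mk)
  refine ⟨K, hKx, IsCompact.closure_of_subset
    (hI.isCompact_biUnion fun i _ => isCompact_transporter hK (hD i)) ?_⟩
  rintro g ⟨a, ha, hga⟩
  obtain ⟨i, hgaD, hgaW⟩ := mem_iUnion.1 hga
  have hπ : π (g • a) = π a := mk_eq_mk_iff_mem_orbit.2 (mem_orbit a g)
  exact mem_biUnion (x := i) ⟨π a, hπ ▸ hgaW, a, ha, rfl⟩ ⟨a, ha, subset_closure hgaD⟩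

theorem exists_isClosed_isOpen_isFundamentalSet [T2Space X] [LocallyCompactSpace X]
    [ParacompactSpace (Quotient (orbitRel G X))] {U : Set X} (hU : IsOpen U)
    (hUorb : ∀ x : X, ∃ g : G, g • x ∈ U) :
    ∃ Fc Fo : Set X, IsClosed Fc ∧ IsOpen Fo ∧ IsFundamentalSet G Fc ∧ IsFundamentalSet G Fo ∧
      Fc ⊆ Fo ∧ Fo ⊆ U := by
  have hnhds (u : U) : ∃ V Vp : Set X, IsOpen V ∧ IsOpen Vp ∧ (u : X) ∈ V ∧ closure V ⊆ Vp ∧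
      Vp ⊆ U ∧ IsCompact (closure V) ∧ IsCompact (closure Vp) := by
    obtain ⟨Vp, hVpo, huVp, hVpU, hVpc⟩ := exists_open_between_and_isCompact_closure
      isCompact_singleton hU (singleton_subset_iff.2 u.2)
    obtain ⟨V, hVo, huV, hVVp, hVc⟩ :=
      exists_open_between_and_isCompact_closure isCompact_singleton hVpo huVp
    exact ⟨V, Vp, hVo, hVpo, singleton_subset_iff.1 huV, hVVp, subset_closure.trans hVpU, hVc,
      hVpc⟩
  choose V Vp hVo hVpo huV hVVp hVpU hVc hVpc using hnhds
  have hcov : ⋃ u, π '' V u = univ := eq_univ_of_forall fun q => by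
    obtain ⟨x, rfl⟩ := Quotient.exists_rep q
    obtain ⟨g, hg⟩ := hUorb x
    exact mem_iUnion.2 ⟨⟨g • x, hg⟩, g • x, huV _, mk_eq_mk_iff_mem_orbit.2 (mem_orbit x g)⟩
  obtain ⟨W, hWo, hWcov, hW, hWV⟩ :=
    precise_refinement _ (fun u => isOpenMap_quotient_mk'_mul _ (hVo u)) hcov
  obtain ⟨W', hW'cov, -, hW'W⟩ :=
    exists_iUnion_eq_closure_subset hWo (fun q => hW.point_finite q) hWcov
  set Fo := ⋃ u, Vp u ∩ π ⁻¹' W u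
  set Fc := ⋃ u, closure (V u) ∩ π ⁻¹' closure (W' u)
  have hFcFo : Fc ⊆ Fo :=
    iUnion_mono fun u => inter_subset_inter (hVVp u) (preimage_mono (hW'W u))
  have hFccov (x : X) : ∃ g : G, ∃ y ∈ Fc, g • y = x := by
    obtain ⟨u, hu⟩ := mem_iUnion.1 (hW'cov.symm ▸ mem_univ (π x))
    obtain ⟨d, hd, hdx : π d = π x⟩ := hWV u (hW'W u (subset_closure hu))
    obtain ⟨g, hg⟩ := exists_smul_eq_of_mk_eq hdx
    have hdW : π d ∈ closure (W' u) := hdx ▸ subset_closure hu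
    exact ⟨g, d, mem_iUnion.2 ⟨u, subset_closure hd, hdW⟩, hg⟩
  have hFo : IsFundamentalSet G Fo :=
    ⟨fun x => let ⟨g, y, hy, hgy⟩ := hFccov x; ⟨g, y, hFcFo hy, hgy⟩,
      exists_mem_nhds_isCompact_closure_transporter_iUnion hW hVpc⟩
  refine ⟨Fc, Fo, ?_, isOpen_iUnion fun u => (hVpo u).inter ((hWo u).preimage continuous_quot_mk),
    hFo.mono hFcFo hFccov, hFo, hFcFo, iUnion_subset fun u => inter_subset_left.trans (hVpU u)⟩
  refine ((hW.preimage_continuous continuous_quot_mk).subset fun u => ?_).isClosed_iUnion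
    fun u => (hVc u).isClosed.inter (isClosed_closure.preimage continuous_quot_mk)
  exact inter_subset_right.trans (preimage_mono (hW'W u))

end FundamentalSets

theorem section_fundamental_sets_general
    (G X : Type*) [Group G] [TopologicalSpace G] [IsTopologicalGroup G]
    [tX : TopologicalSpace X] [T2Space X] [LocallyCompactSpace X]
    [MulAction G X]
    (hproper : IsProperMap (fun p : G × X => (p.2, p.1 • p.2)))
    (hpara : ParacompactSpace (Quotient (MulAction.orbitRel G X)))
    (S : Set X) (hS : ∀ x : X, ∃! s : X, s ∈ S ∧ s ∈ MulAction.orbit G x) :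
    ∀ U : Set X, IsOpen U → S ⊆ U →
      ∃ Fc Fo : Set X, IsClosed Fc ∧ IsOpen Fo ∧
        IsFundamentalSet G Fc ∧ IsFundamentalSet G Fo ∧ Fc ⊆ Fo ∧ Fo ⊆ U ∧
        (∀ m : MetricSpace X, m.toUniformSpace.toTopologicalSpace = tX →
          TopologicalSpace.SeparableSpace X →
          ∃ SB : Set X, @MeasurableSet _ (borel X) SB ∧
            (∀ x : X, ∃! s : X, s ∈ SB ∧ s ∈ MulAction.orbit G x) ∧
            IsFundamentalSet G SB ∧ SB ⊆ Fc) := by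
  intro U hU hSU
  have : ProperSMul G X := ⟨(Homeomorph.prodComm X X).isProperMap.comp hproper⟩
  have hUorb (x : X) : ∃ g : G, g • x ∈ U := by
    obtain ⟨s, ⟨hs, g, rfl⟩, -⟩ := hS x
    exact ⟨g, hSU hs⟩
  obtain ⟨Fc, Fo, hFc, hFo, hFcF, hFoF, hFcFo, hFoU⟩ :=
    exists_isClosed_isOpen_isFundamentalSet hU hUorb
  refine ⟨Fc, Fo, hFc, hFo, hFcF, hFoF, hFcFo, hFoU, fun m hm _ => ?_⟩
  subst hm
  borelize X
  obtain ⟨SB, hSBFc, hSB, hsec, hSBF⟩ := hFcF.exists_measurableSet_section hFc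
  exact ⟨SB, hSB, hsec, hSBF, hSBFc⟩

/-- Theorem (sections, Borel sections and fundamental sets): let `G` be a locally
compact group acting properly and continuously on a locally compact Hausdorff space
`X` with paracompact orbit space, and let `S` be a section of the action.  Then
(i) for every open `U ⊇ S` there are a closed fundamental set `F_c` and an open
fundamental set `F_o` with `F_c ⊆ F_o ⊆ U`; and (ii) if moreover the topology of `X`
is induced by a metric and `X` is separable, there is a Borel section `S_B` which is
also a fundamental set and satisfies `S_B ⊆ F_c ⊆ F_o ⊆ U`. -/
theorem section_fundamental_sets
    (G X : Type*) [Group G] [TopologicalSpace G] [IsTopologicalGroup G]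
    [LocallyCompactSpace G] [tX : TopologicalSpace X] [T2Space X] [LocallyCompactSpace X]
    [MulAction G X] [ContinuousSMul G X]
    (hproper : IsProperMap (fun p : G × X => (p.2, p.1 • p.2)))
    (hpara : ParacompactSpace (Quotient (MulAction.orbitRel G X)))
    (S : Set X) (hS : ∀ x : X, ∃! s : X, s ∈ S ∧ s ∈ MulAction.orbit G x) :
    ∀ U : Set X, IsOpen U → S ⊆ U →
      ∃ Fc Fo : Set X, IsClosed Fc ∧ IsOpen Fo ∧
        IsFundamentalSet G Fc ∧ IsFundamentalSet G Fo ∧ Fc ⊆ Fo ∧ Fo ⊆ U ∧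
        (∀ m : MetricSpace X, m.toUniformSpace.toTopologicalSpace = tX →
          TopologicalSpace.SeparableSpace X →
          ∃ SB : Set X, @MeasurableSet _ (borel X) SB ∧
            (∀ x : X, ∃! s : X, s ∈ SB ∧ s ∈ MulAction.orbit G x) ∧
            IsFundamentalSet G SB ∧ SB ⊆ Fc) :=
  section_fundamental_sets_general G X (tX := tX) hproper hpara S hS
end
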